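/- Fix an integer L ≥ 1. For every ε > 0 there exists M₀ > 0 such that for all M ≥ M₀, limsup_{t→∞} Σ_{q=L+1}^{⌊2t − M t^{1/3} − 1⌋} (2t)²/(q^{3/2}(2t−q)^{5/2}) ≤ ε; that is, lim_{M→∞} limsup_{t→∞} of this sum equals 0. -/

import Mathlib

/-!
Write `r = 2t - q`. As `q + r = 2t`, one of `q, r` is at least `t`, so each term is at most
`4 t^(-1/2) q^(-3/2) + 4 t^(1/2) r^(-5/2)`. The first parts add up to at most
`4 ζ(3/2) t^(-1/2) → 0`. On the range of summation `r ≥ c + 1` with `c = M t^(1/3)`, and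
`r^(-5/2) ≤ c^(-1/2) (1/(r-1) - 1/r)` telescopes, so the second parts add up to at most
`4 t^(1/2) c^(-3/2) = 4 M^(-3/2)`. Hence the limsup is at most `4 M^(-3/2)`.
-/

open Filter Real Finset Topology

lemma Int.sum_Icc_natCast_add_one {M : Type*} [AddCommMonoid M] (f : ℤ → M) (m : ℕ) (b : ℤ) :
    ∑ q ∈ Icc ((m : ℤ) + 1) b, f q = ∑ n ∈ Icc (m + 1) b.toNat, f n := by
  have : (Icc (m + 1) b.toNat).map Nat.castEmbedding = Icc ((m : ℤ) + 1) b := by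
    ext q
    simp only [Finset.mem_map, mem_Icc, Nat.castEmbedding_apply]
    constructor
    · rintro ⟨n, ⟨h₁, h₂⟩, rfl⟩
      omega
    · rintro ⟨h₁, h₂⟩
      exact ⟨q.toNat, by omega, by omega⟩
  rw [← this, sum_map]
  rfl

lemma inv_rpow_mul_rpow_le_add {q r t α β : ℝ} (hq : 0 < q) (hr : 0 < r) (hqr : q + r = 2 * t)
    (hα : 0 ≤ α) (hβ : 0 ≤ β) :
    (q ^ α * r ^ β)⁻¹ ≤ (q ^ α * t ^ β)⁻¹ + (t ^ α * r ^ β)⁻¹ := by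
  have ht : 0 < t := by linarith
  rcases le_total t r with htr | hrt
  · have : (q ^ α * r ^ β)⁻¹ ≤ (q ^ α * t ^ β)⁻¹ := by gcongr
    have : 0 ≤ (t ^ α * r ^ β)⁻¹ := by positivity
    linarith
  · have htq : t ≤ q := by linarith
    have : (q ^ α * r ^ β)⁻¹ ≤ (t ^ α * r ^ β)⁻¹ := by gcongr
    have : 0 ≤ (q ^ α * t ^ β)⁻¹ := by positivity
    linarith

/-- Since `r ^ 2 > r (r - 1)`, each term `r ^ (-p)` is dominated by a telescoping difference. -/
lemma inv_rpow_le_mul_sub_inv {r c p : ℝ} (hc : 0 < c) (hcr : c + 1 ≤ r) (hp : 2 ≤ p) :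
    (r ^ p)⁻¹ ≤ (c ^ (p - 2))⁻¹ * ((r - 1)⁻¹ - r⁻¹) := by
  have hr : 0 < r := by linarith
  have hr1 : 0 < r - 1 := by linarith
  have hsplit : r ^ p = r ^ (p - 2) * r ^ 2 := by
    rw [← Real.rpow_natCast, ← Real.rpow_add hr]; norm_num
  have hsq : (r ^ 2)⁻¹ ≤ (r - 1)⁻¹ - r⁻¹ := by
    rw [inv_sub_inv hr1.ne' hr.ne', show r - (r - 1) = 1 by ring, pow_two, one_div]
    gcongr
    linarith
  rw [hsplit, mul_inv]
  gcongr
  linarith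

lemma sum_range_inv_rpow_sub_le {x c p : ℝ} {k : ℕ} (hc : 0 < c) (hp : 2 ≤ p) (hk : c ≤ x - k) :
    ∑ n ∈ range k, ((x - n) ^ p)⁻¹ ≤ (c ^ (p - 1))⁻¹ := by
  calc ∑ n ∈ range k, ((x - n) ^ p)⁻¹
      ≤ ∑ n ∈ range k, (c ^ (p - 2))⁻¹ * ((x - n - 1)⁻¹ - (x - n)⁻¹) := by
        refine sum_le_sum fun n hn => inv_rpow_le_mul_sub_inv hc ?_ hp
        have : (n : ℝ) + 1 ≤ k := by exact_mod_cast mem_range.1 hn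
        linarith
    _ = (c ^ (p - 2))⁻¹ * ((x - k)⁻¹ - x⁻¹) := by
        have htel := sum_range_sub (fun n : ℕ => (x - n)⁻¹) k
        push_cast at htel
        rw [← mul_sum]
        congr 1
        simpa [sub_sub] using htel
    _ ≤ (c ^ (p - 2))⁻¹ * c⁻¹ := by
        have : 0 ≤ x⁻¹ := inv_nonneg.2 (by linarith [(Nat.cast_nonneg k : (0 : ℝ) ≤ k)])
        gcongr
        linarith [inv_anti₀ hc hk]
    _ = (c ^ (p - 1))⁻¹ := by
        rw [← mul_inv, ← Real.rpow_add_one hc.ne']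
        ring_nf

lemma sum_inv_rpow_sub_le {s : Finset ℕ} {x c p : ℝ} (hc : 0 < c) (hp : 2 ≤ p)
    (hs : ∀ n ∈ s, (n : ℝ) + 1 ≤ x - c) :
    ∑ n ∈ s, ((x - n) ^ p)⁻¹ ≤ (c ^ (p - 1))⁻¹ := by
  rcases s.eq_empty_or_nonempty with rfl | ⟨n₀, hn₀⟩
  · simp only [sum_empty]; positivity
  have hxc : 0 ≤ x - c := by linarith [hs n₀ hn₀, (Nat.cast_nonneg n₀ : (0 : ℝ) ≤ n₀)]
  have hsub : s ⊆ range ⌊x - c⌋₊ := fun n hn => by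
    rw [mem_range, Nat.lt_iff_add_one_le]
    exact Nat.le_floor (by exact_mod_cast hs n hn)
  calc ∑ n ∈ s, ((x - n) ^ p)⁻¹ ≤ ∑ n ∈ range ⌊x - c⌋₊, ((x - n) ^ p)⁻¹ := by
        refine sum_le_sum_of_subset_of_nonneg hsub fun n hn _ => ?_
        have := Nat.floor_le hxc
        have : (n : ℝ) + 1 ≤ ⌊x - c⌋₊ := by exact_mod_cast mem_range.1 hn
        have : 0 < x - n := by linarith
        positivity
    _ ≤ (c ^ (p - 1))⁻¹ := sum_range_inv_rpow_sub_le hc hp (by linarith [Nat.floor_le hxc])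

lemma Real.rpow_three_halves {t : ℝ} (ht : 0 ≤ t) : t ^ ((3 : ℝ) / 2) = t * √t := by
  rw [show (3 : ℝ) / 2 = 1 + 1 / 2 by norm_num, Real.rpow_add' ht (by norm_num), Real.rpow_one,
    Real.sqrt_eq_rpow]

lemma Real.rpow_five_halves {t : ℝ} (ht : 0 ≤ t) : t ^ ((5 : ℝ) / 2) = t ^ 2 * √t := by
  rw [show (5 : ℝ) / 2 = 2 + 1 / 2 by norm_num, Real.rpow_add' ht (by norm_num), Real.rpow_two,
    Real.sqrt_eq_rpow]

lemma two_mul_sq_div_rpow_mul_rpow_le {q t : ℝ} (hq : 0 < q) (hqt : q < 2 * t) :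
    (2 * t) ^ 2 / (q ^ ((3 : ℝ) / 2) * (2 * t - q) ^ ((5 : ℝ) / 2)) ≤
      4 / √t * (q ^ ((3 : ℝ) / 2))⁻¹ + 4 * √t * ((2 * t - q) ^ ((5 : ℝ) / 2))⁻¹ := by
  have ht : 0 < t := by linarith
  have hst : 0 < √t := Real.sqrt_pos.2 ht
  calc (2 * t) ^ 2 / (q ^ ((3 : ℝ) / 2) * (2 * t - q) ^ ((5 : ℝ) / 2))
      ≤ (2 * t) ^ 2 * ((q ^ ((3 : ℝ) / 2) * t ^ ((5 : ℝ) / 2))⁻¹ +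
          (t ^ ((3 : ℝ) / 2) * (2 * t - q) ^ ((5 : ℝ) / 2))⁻¹) := by
        rw [div_eq_mul_inv]
        gcongr
        exact inv_rpow_mul_rpow_le_add hq (by linarith) (by ring) (by norm_num) (by norm_num)
    _ = 4 / √t * (q ^ ((3 : ℝ) / 2))⁻¹ + 4 * √t * ((2 * t - q) ^ ((5 : ℝ) / 2))⁻¹ := by
        rw [Real.rpow_three_halves ht.le, Real.rpow_five_halves ht.le]
        field_simp
        rw [Real.sq_sqrt ht.le]
        ring

noncomputable def cutoffSum (L : ℕ) (t c : ℝ) : ℝ :=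
  ∑ q ∈ Icc ((L : ℤ) + 1) ⌊2 * t - c - 1⌋,
    (2 * t) ^ 2 / ((q : ℝ) ^ ((3 : ℝ) / 2) * (2 * t - (q : ℝ)) ^ ((5 : ℝ) / 2))

section

variable {L : ℕ} {t c : ℝ}

lemma cutoffSum_eq_sum_nat : cutoffSum L t c = ∑ n ∈ Icc (L + 1) ⌊2 * t - c - 1⌋.toNat,
    (2 * t) ^ 2 / ((n : ℝ) ^ ((3 : ℝ) / 2) * (2 * t - n) ^ ((5 : ℝ) / 2)) := by
  rw [cutoffSum, Int.sum_Icc_natCast_add_one]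
  simp only [Int.cast_natCast]

lemma natCast_add_one_le_of_mem_Icc_floor {n : ℕ} (hn : n ∈ Icc (L + 1) ⌊2 * t - c - 1⌋.toNat) :
    (n : ℝ) + 1 ≤ 2 * t - c := by
  rw [mem_Icc] at hn
  have hle := Int.le_floor.1 (show (n : ℤ) ≤ ⌊2 * t - c - 1⌋ by omega)
  push_cast at hle
  linarith

lemma cutoffSum_nonneg (hc : 0 ≤ c) : 0 ≤ cutoffSum L t c := by
  rw [cutoffSum_eq_sum_nat]
  refine sum_nonneg fun n hn => ?_
  have : 0 ≤ 2 * t - n := by linarith [natCast_add_one_le_of_mem_Icc_floor hn]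
  positivity

lemma cutoffSum_le (ht : 0 < t) (hc : 0 < c) :
    cutoffSum L t c ≤
      4 / √t * ∑' n : ℕ, ((n : ℝ) ^ ((3 : ℝ) / 2))⁻¹ + 4 * √t * (c ^ ((3 : ℝ) / 2))⁻¹ := by
  rw [cutoffSum_eq_sum_nat]
  set s := Icc (L + 1) ⌊2 * t - c - 1⌋.toNat
  have hs : ∀ n ∈ s, (n : ℝ) + 1 ≤ 2 * t - c := fun n hn => natCast_add_one_le_of_mem_Icc_floor hn
  calc ∑ n ∈ s, (2 * t) ^ 2 / ((n : ℝ) ^ ((3 : ℝ) / 2) * (2 * t - n) ^ ((5 : ℝ) / 2))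
      ≤ ∑ n ∈ s, (4 / √t * ((n : ℝ) ^ ((3 : ℝ) / 2))⁻¹ +
          4 * √t * ((2 * t - n) ^ ((5 : ℝ) / 2))⁻¹) := by
        refine sum_le_sum fun n hn => two_mul_sq_div_rpow_mul_rpow_le ?_ (by linarith [hs n hn])
        exact Nat.cast_pos.2 (by have := (mem_Icc.1 hn).1; omega)
    _ = 4 / √t * ∑ n ∈ s, ((n : ℝ) ^ ((3 : ℝ) / 2))⁻¹ +
          4 * √t * ∑ n ∈ s, ((2 * t - n) ^ ((5 : ℝ) / 2))⁻¹ := by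
        rw [sum_add_distrib, mul_sum, mul_sum]
    _ ≤ 4 / √t * ∑' n : ℕ, ((n : ℝ) ^ ((3 : ℝ) / 2))⁻¹ +
          4 * √t * (c ^ ((3 : ℝ) / 2))⁻¹ := by
        gcongr
        · exact (Real.summable_nat_rpow_inv.2 (by norm_num)).sum_le_tsum s
            fun n _ => by positivity
        · exact (sum_inv_rpow_sub_le (p := 5 / 2) hc (by norm_num) hs).trans_eq (by norm_num)

lemma cutoffSum_mul_rpow_one_third_le {M : ℝ} (ht : 0 < t) (hM : 0 < M) :
    cutoffSum L t (M * t ^ ((1 : ℝ) / 3)) ≤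
      4 / √t * ∑' n : ℕ, ((n : ℝ) ^ ((3 : ℝ) / 2))⁻¹ + 4 / M ^ ((3 : ℝ) / 2) := by
  refine (cutoffSum_le ht (by positivity)).trans_eq ?_
  rw [Real.mul_rpow hM.le (by positivity), ← Real.rpow_mul ht.le, Real.sqrt_eq_rpow]
  field_simp

end

lemma div_rpow_three_halves_le {ε M : ℝ} (hε : 0 < ε) (hM : (4 / ε) ^ ((2 : ℝ) / 3) ≤ M) :
    4 / M ^ ((3 : ℝ) / 2) ≤ ε := by
  have h : 4 / ε ≤ M ^ ((3 : ℝ) / 2) :=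
    calc 4 / ε = ((4 / ε) ^ ((2 : ℝ) / 3)) ^ ((3 : ℝ) / 2) := by
          rw [← Real.rpow_mul (by positivity)]; norm_num
      _ ≤ M ^ ((3 : ℝ) / 2) := by gcongr
  have : 0 < M ^ ((3 : ℝ) / 2) := lt_of_lt_of_le (by positivity) h
  rw [div_le_iff₀ hε] at h
  rw [div_le_iff₀ this]
  linarith

theorem sum_q_three_half_vanishes (L : ℕ) :
    ∀ ε : ℝ, 0 < ε → ∃ M₀ : ℝ, 0 < M₀ ∧ ∀ M : ℝ, M₀ ≤ M →
      Filter.limsup (fun t : ℝ =>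
          ∑ q ∈ Finset.Icc ((L : ℤ) + 1) ⌊2 * t - M * t ^ ((1 : ℝ) / 3) - 1⌋,
            (2 * t) ^ 2 / ((q : ℝ) ^ ((3 : ℝ) / 2) * (2 * t - (q : ℝ)) ^ ((5 : ℝ) / 2)))
        atTop ≤ ε := by
  intro ε hε
  refine ⟨(4 / ε) ^ ((2 : ℝ) / 3), by positivity, fun M hM => ?_⟩
  have hM0 : 0 < M := lt_of_lt_of_le (by positivity) hM
  set g := fun t : ℝ => 4 / √t * ∑' n : ℕ, ((n : ℝ) ^ ((3 : ℝ) / 2))⁻¹ + 4 / M ^ ((3 : ℝ) / 2)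
  have hg : Tendsto g atTop (𝓝 (4 / M ^ ((3 : ℝ) / 2))) := by
    simpa using ((tendsto_const_nhds.div_atTop Real.tendsto_sqrt_atTop).mul_const _).add_const
      (4 / M ^ ((3 : ℝ) / 2))
  have hle : ∀ᶠ t in atTop, cutoffSum L t (M * t ^ ((1 : ℝ) / 3)) ≤ g t :=
    (eventually_gt_atTop 0).mono fun t ht => cutoffSum_mul_rpow_one_third_le ht hM0
  have hnonneg : ∀ᶠ t in atTop, 0 ≤ cutoffSum L t (M * t ^ ((1 : ℝ) / 3)) :=
    (eventually_ge_atTop 0).mono fun t ht => cutoffSum_nonneg (by positivity)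
  show limsup (fun t => cutoffSum L t (M * t ^ ((1 : ℝ) / 3))) atTop ≤ ε
  calc limsup (fun t => cutoffSum L t (M * t ^ ((1 : ℝ) / 3))) atTop ≤ limsup g atTop :=
        limsup_le_limsup hle (isCoboundedUnder_le_of_eventually_le atTop hnonneg)
          hg.isBoundedUnder_le
    _ = 4 / M ^ ((3 : ℝ) / 2) := hg.limsup_eq
    _ ≤ ε := div_rpow_three_halves_le hε hM
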